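/- Let 𝒯₀ be an E-closed set of complete theories. If 𝒯'₀ ⊆ 𝒯₀ is a minimal generating set for 𝒯₀ (Cl_E(𝒯'₀) = 𝒯₀ and no proper subset generates 𝒯₀), then 𝒯'₀ is the least generating set: 𝒯'₀ is contained in every generating subset of 𝒯₀. -/

import Mathlib

open FirstOrder

/-- The E-closure of a family of theories: the family itself together with all
maximal (complete) theories each of whose sentences belongs to infinitely many
members of the family (Proposition 2.2 of the paper). -/
def ClE {L : Language} (𝒯 : Set L.Theory) : Set L.Theory :=
  𝒯 ∪ {T | T.IsMaximal ∧ ∀ φ ∈ T, {T' ∈ 𝒯 | φ ∈ T'}.Infinite}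

/-! If `T ∈ 𝒯'₀` is missing from another generating set `𝒯''₀`, then `𝒯''₀` lies in
`Cl_E(𝒯'₀) \ {T}`, and removing the single point `T` does not destroy any limit point, so
`𝒯''₀ ⊆ Cl_E(𝒯'₀ \ {T})`. Since `Cl_E` is idempotent, `𝒯'₀ \ {T}` already generates
`Cl_E(𝒯''₀) = 𝒯₀`, against minimality. -/

section ClE

variable {L : Language}

theorem ClE_mono {𝒯 𝒮 : Set L.Theory} (h : 𝒯 ⊆ 𝒮) : ClE 𝒯 ⊆ ClE 𝒮 := by
  rintro T (hT | ⟨hmax, hlim⟩)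
  · exact Or.inl (h hT)
  · exact Or.inr ⟨hmax, fun φ hφ => (hlim φ hφ).mono fun S hS => ⟨h hS.1, hS.2⟩⟩

theorem ClE_diff_of_finite {𝒯 F : Set L.Theory} (hF : F.Finite) :
    ClE 𝒯 \ F ⊆ ClE (𝒯 \ F) := by
  rintro T ⟨hT | ⟨hmax, hlim⟩, hTF⟩
  · exact Or.inl ⟨hT, hTF⟩
  · refine Or.inr ⟨hmax, fun φ hφ => ((hlim φ hφ).sdiff hF).mono ?_⟩
    rintro S ⟨⟨hS, hφS⟩, hSF⟩
    exact ⟨⟨hS, hSF⟩, hφS⟩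

theorem ClE_subset_of_subset_ClE {𝒮 𝒯 : Set L.Theory} (h : 𝒮 ⊆ ClE 𝒯) :
    ClE 𝒮 ⊆ ClE 𝒯 := by
  rintro T (hT | ⟨hmax, hlim⟩)
  · exact h hT
  refine Or.inr ⟨hmax, fun φ hφ => ?_⟩
  by_cases hout : ∃ S ∈ 𝒮, φ ∈ S ∧ S ∉ 𝒯
  · obtain ⟨S, hS, hφS, hS𝒯⟩ := hout
    obtain hS' | ⟨-, hSlim⟩ := h hS
    · exact absurd hS' hS𝒯
    · exact hSlim φ hφS
  · simp only [not_exists, not_and, not_not] at hout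
    exact (hlim φ hφ).mono fun S hS => ⟨hout S hS.1 hS.2, hS.2⟩

end ClE

theorem minimal_generating_is_least_general {L : Language}
    (𝒯₀ 𝒯'₀ : Set L.Theory)
    (hgen : ClE 𝒯'₀ = 𝒯₀)
    (hmin : ∀ S ⊂ 𝒯'₀, ClE S ≠ 𝒯₀) :
    ∀ 𝒯''₀ ⊆ 𝒯₀, ClE 𝒯''₀ = 𝒯₀ → 𝒯'₀ ⊆ 𝒯''₀ := by
  intro 𝒯'' hsub'' hgen'' T hT
  by_contra hT''
  apply hmin (𝒯'₀ \ {T}) (Set.sdiff_singleton_ssubset.2 hT)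
  refine ((ClE_mono Set.sdiff_subset).trans hgen.le).antisymm ?_
  rw [← hgen'']
  apply ClE_subset_of_subset_ClE
  calc 𝒯'' ⊆ ClE 𝒯'₀ \ {T} := fun S hS => ⟨hgen ▸ hsub'' hS, fun hST => hT'' (hST ▸ hS)⟩
    _ ⊆ ClE (𝒯'₀ \ {T}) := ClE_diff_of_finite (Set.finite_singleton T)

/-- Theorem 3.2, (2) ⇒ (1): a minimal generating set of an E-closed set is least. -/
theorem minimal_generating_is_least {L : Language}
    (𝒯₀ 𝒯'₀ : Set L.Theory)
    (hcomp : ∀ T ∈ 𝒯₀, T.IsMaximal)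
    (hclosed : ClE 𝒯₀ = 𝒯₀)
    (hsub : 𝒯'₀ ⊆ 𝒯₀)
    (hgen : ClE 𝒯'₀ = 𝒯₀)
    (hmin : ∀ S ⊂ 𝒯'₀, ClE S ≠ 𝒯₀) :
    ∀ 𝒯''₀ ⊆ 𝒯₀, ClE 𝒯''₀ = 𝒯₀ → 𝒯'₀ ⊆ 𝒯''₀ :=
  minimal_generating_is_least_general 𝒯₀ 𝒯'₀ hgen hmin
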